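/- For every C > 0 there exists an integer k0 such that for all k ≥ k0, all d > 0 with 2^{k−1}·ln 2 − C ≤ d/k ≤ 2^{k−1}·ln 2 − 2, and all β ≥ 0: Λ_β(0) > Λ_β(α) for all α ∈ [−1,1]∖{0}. -/

import Mathlib

noncomputable section

open Finset Filter Real
open scoped Classical BigOperators

/-- The set of all `k`-element subsets of `Fin n` (the potential edges of a
`k`-uniform hypergraph on `[n]`). -/
def kSets (n k : ℕ) : Finset (Finset (Fin n)) :=
  Finset.univ.filter fun e => e.card = k

/-- An edge is monochromatic under the 2-coloring `σ`. -/
def isMono {n : ℕ} (σ : Fin n → Bool) (e : Finset (Fin n)) : Prop :=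
  ∀ v ∈ e, ∀ w ∈ e, σ v = σ w

/-- The number `E_H(σ)` of monochromatic edges of the hypergraph `H` under `σ`. -/
def monoCount {n : ℕ} (H : Finset (Finset (Fin n))) (σ : Fin n → Bool) : ℕ :=
  (H.filter fun e => isMono σ e).card

/-- The partition function `Z_β(H)`. -/
def Zp {n : ℕ} (β : ℝ) (H : Finset (Finset (Fin n))) : ℝ :=
  ∑ τ : Fin n → Bool, Real.exp (-β * (monoCount H τ : ℝ))

/-- Probability of obtaining the hypergraph `H` in the binomial model `H_k(n,p)`. -/
def probHnp (n k : ℕ) (p : ℝ) (H : Finset (Finset (Fin n))) : ℝ :=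
  if H ⊆ kSets n k then p ^ H.card * (1 - p) ^ ((kSets n k).card - H.card) else 0

/-- Expectation of `f` over `H_k(n,p)`. -/
def expHnp (n k : ℕ) (p : ℝ) (f : Finset (Finset (Fin n)) → ℝ) : ℝ :=
  ∑ H : Finset (Finset (Fin n)), probHnp n k p H * f H

/-- Probability of an event under `H_k(n,p)`. -/
def prHnp (n k : ℕ) (p : ℝ) (A : Finset (Finset (Fin n)) → Prop) : ℝ :=
  expHnp n k p fun H => if A H then 1 else 0

/-- The edge probability `p = d / C(n-1,k-1)`. -/
def pEdge (n k : ℕ) (d : ℝ) : ℝ := d / ((n - 1).choose (k - 1) : ℝ)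

/-- The first-moment value `ln 2 + (d/k)·ln(1 − 2^{1−k}(1 − e^{−β}))`. -/
def phiBound (k : ℕ) (d β : ℝ) : ℝ :=
  Real.log 2 + d / k * Real.log (1 - (2:ℝ) ^ ((1:ℤ) - k) * (1 - Real.exp (-β)))

/-- The sequence `n ↦ (1/n)·E[ln Z_β(H_k(n,p))]` with `p = d/C(n-1,k-1)`. -/
def freeEnergySeq (k : ℕ) (d β : ℝ) (n : ℕ) : ℝ :=
  expHnp n k (pEdge n k d) (fun H => Real.log (Zp β H)) / n

/-- The function `Σ_{k,d}(β)`. -/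
def SigmaKD (k : ℕ) (d β : ℝ) : ℝ :=
  (β + 1) * Real.exp (-β + k * Real.log 2) * Real.log 2
    - 2 * (d / k - (2:ℝ) ^ (k - 1) * Real.log 2 + Real.log 2)

/-- `m = ⌈dn/k⌉`. -/
def mOf (d : ℝ) (k n : ℕ) : ℕ := ⌈d * n / (k:ℝ)⌉₊

/-- Number of monochromatic edges, with multiplicity, of a multi-hypergraph given as a
tuple of `m` edges. -/
def monoCountM {n m : ℕ} (H : Fin m → Finset (Fin n)) (σ : Fin n → Bool) : ℕ :=
  (Finset.univ.filter fun i : Fin m => isMono σ (H i)).card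

/-- Partition function of a multi-hypergraph. -/
def ZpM {n m : ℕ} (β : ℝ) (H : Fin m → Finset (Fin n)) : ℝ :=
  ∑ τ : Fin n → Bool, Real.exp (-β * (monoCountM H τ : ℝ))

/-- Expectation over `H'_k(n,m)`: `m` edges chosen uniformly and independently with
replacement from all `k`-subsets of `[n]`. -/
def expHM (n k m : ℕ) (f : (Fin m → Finset (Fin n)) → ℝ) : ℝ :=
  ∑ H : Fin m → Finset (Fin n),
    (∏ i : Fin m, if H i ∈ kSets n k then ((kSets n k).card : ℝ)⁻¹ else 0) * f H

/-- Probability of `H` under `H_k(n,m)`: `m` distinct edges chosen uniformly without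
replacement. -/
def probHnm (n k m : ℕ) (H : Finset (Finset (Fin n))) : ℝ :=
  if H ⊆ kSets n k ∧ H.card = m then ((kSets n k).card.choose m : ℝ)⁻¹ else 0

/-- Expectation of `f` over `H_k(n,m)`. -/
def expHnm (n k m : ℕ) (f : Finset (Finset (Fin n)) → ℝ) : ℝ :=
  ∑ H : Finset (Finset (Fin n)), probHnm n k m H * f H

/-- Number of vertices with color `true` (i.e. `|σ⁻¹(1)|`). -/
def numPlus {n : ℕ} (σ : Fin n → Bool) : ℕ :=
  (Finset.univ.filter fun v => σ v = true).card

/-- A coloring is balanced if `||σ⁻¹(1)| − n/2| ≤ √n`. -/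
def isBalanced {n : ℕ} (σ : Fin n → Bool) : Prop :=
  |(numPlus σ : ℝ) - n / 2| ≤ Real.sqrt n

/-- The overlap `⟨σ,τ⟩ = ∑_v σ(v)τ(v)`. -/
def overlap {n : ℕ} (σ τ : Fin n → Bool) : ℤ :=
  ∑ _v ∈ Finset.univ.filter (fun v : Fin n => σ v = τ v), (1:ℤ) +
    ∑ _v ∈ Finset.univ.filter (fun v : Fin n => σ v ≠ τ v), (-1:ℤ)

/-- The cluster size `C_β(H,σ)`. -/
def clusterSize {n : ℕ} (β : ℝ) (H : Finset (Finset (Fin n))) (σ : Fin n → Bool) : ℝ :=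
  ∑ τ : Fin n → Bool,
    if 2 * (n:ℝ) / 3 ≤ (overlap σ τ : ℝ) then Real.exp (-β * (monoCount H τ : ℝ)) else 0

/-- The entropy function `H(z)`. -/
def entH (z : ℝ) : ℝ := -z * Real.log z - (1 - z) * Real.log (1 - z)

/-- The second-moment exponent `Λ_β(α)`. -/
def Lam (k : ℕ) (d β α : ℝ) : ℝ :=
  entH ((1 + α) / 2) +
    d / k * Real.log (1 - (2:ℝ) ^ ((1:ℤ) - k) * (1 - Real.exp (-β)) *
      (2 - (1 - Real.exp (-β)) * ((1 + α) ^ k + (1 - α) ^ k) / 2 ^ k))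

/-- The pair partition function `Z_β(α)` with `α = 2ν/n − 1`, i.e. overlap `2ν − n`. -/
def Zpair {n m : ℕ} (β : ℝ) (ν : ℕ) (H : Fin m → Finset (Fin n)) : ℝ :=
  ∑ σ : Fin n → Bool, ∑ τ : Fin n → Bool,
    if isBalanced σ ∧ isBalanced τ ∧ overlap σ τ = 2 * (ν:ℤ) - (n:ℤ) then
      Real.exp (-β * ((monoCountM H σ : ℝ) + (monoCountM H τ : ℝ)))
    else 0

/-- Partition function of a multi-hypergraph restricted to balanced colorings. -/
def ZpMbal {n m : ℕ} (β : ℝ) (H : Fin m → Finset (Fin n)) : ℝ :=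
  ∑ τ : Fin n → Bool,
    if isBalanced τ then Real.exp (-β * (monoCountM H τ : ℝ)) else 0

/-- `m₀ = 2^{1−k}·e^{−β}·m/(1 − 2^{1−k}(1 − e^{−β}))`. -/
def m0Of (k : ℕ) (β : ℝ) (m : ℕ) : ℝ :=
  (2:ℝ) ^ ((1:ℤ) - k) * Real.exp (-β) * m / (1 - (2:ℝ) ^ ((1:ℤ) - k) * (1 - Real.exp (-β)))

/-- The probability `p₁` of a monochromatic edge in the planted model. -/
def p1Planted (n k : ℕ) (d β : ℝ) : ℝ :=
  Real.exp (-β) * d /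
    ((1 - (2:ℝ) ^ ((1:ℤ) - k) * (1 - Real.exp (-β))) * ((n - 1).choose (k - 1) : ℝ))

/-- The probability `p₂` of a bichromatic edge in the planted model. -/
def p2Planted (n k : ℕ) (d β : ℝ) : ℝ :=
  d / ((1 - (2:ℝ) ^ ((1:ℤ) - k) * (1 - Real.exp (-β))) * ((n - 1).choose (k - 1) : ℝ))

/-- Conditional probability of the hypergraph `H` in the planted model given the planted
coloring `σ`: monochromatic edges appear with probability `q1`, bichromatic ones with `q2`. -/
def probPlanted (n k : ℕ) (q1 q2 : ℝ) (σ : Fin n → Bool)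
    (H : Finset (Finset (Fin n))) : ℝ :=
  if H ⊆ kSets n k then
    (∏ e ∈ (kSets n k).filter (fun e => isMono σ e), if e ∈ H then q1 else 1 - q1) *
      ∏ e ∈ (kSets n k).filter (fun e => ¬ isMono σ e), if e ∈ H then q2 else 1 - q2
  else 0

/-- Probability of an event in the planted model `(σ̂, G)`. -/
def prPlanted (n k : ℕ) (q1 q2 : ℝ)
    (A : (Fin n → Bool) → Finset (Finset (Fin n)) → Prop) : ℝ :=
  ∑ σ : Fin n → Bool, ∑ H : Finset (Finset (Fin n)),
    ((2:ℝ)⁻¹) ^ n * probPlanted n k q1 q2 σ H * (if A σ H then 1 else 0)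

/-- `β_crit(d,k)`, as an extended real (so `⊤ = ∞` if the set is empty). -/
def betaCrit (k : ℕ) (d : ℝ) : EReal :=
  sInf ((fun β : ℝ => (β : EReal)) ''
    {β : ℝ | 0 < β ∧ limsup (freeEnergySeq k d β) atTop < phiBound k d β})

/-- `v` supports the edge `e`: `v ∈ e` and every other vertex of `e` has color `−σ(v)`. -/
def supportsEdge {n : ℕ} (σ : Fin n → Bool) (v : Fin n) (e : Finset (Fin n)) : Prop :=
  v ∈ e ∧ ∀ w ∈ e, w ≠ v → σ w = !(σ v)

/-- An edge `e` is `U`-endangered: all vertices of `U ∩ e` have the same color. -/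
def endangered {n : ℕ} (σ : Fin n → Bool) (U : Finset (Fin n)) (e : Finset (Fin n)) : Prop :=
  ∀ v ∈ U ∩ e, ∀ w ∈ U ∩ e, σ v = σ w

/-- A set `V'` satisfying the two core conditions CR1 and CR2. -/
def goodSet {n : ℕ} (H : Finset (Finset (Fin n))) (σ : Fin n → Bool)
    (V' : Finset (Fin n)) : Prop :=
  (∀ v ∈ V', 100 ≤ (H.filter fun e => supportsEdge σ v e ∧ e ⊆ V').card) ∧
    ∀ v ∈ V', (H.filter fun e => v ∈ e ∧ endangered σ V' e).card ≤ 10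

/-- The core: the largest set satisfying CR1 and CR2 (the union of all such sets). -/
def coreSet {n : ℕ} (H : Finset (Finset (Fin n))) (σ : Fin n → Bool) : Finset (Fin n) :=
  Finset.univ.filter fun v => ∃ V', goodSet H σ V' ∧ v ∈ V'

/-- The backbone: vertices outside the core supporting an edge into the core and occurring
in no `({v} ∪ core)`-endangered edge. -/
def backboneSet {n : ℕ} (H : Finset (Finset (Fin n))) (σ : Fin n → Bool) : Finset (Fin n) :=
  Finset.univ.filter fun v => v ∉ coreSet H σ ∧
    (∃ e ∈ H, supportsEdge σ v e ∧ e \ {v} ⊆ coreSet H σ) ∧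
    ∀ e ∈ H, v ∈ e → ¬ endangered σ (insert v (coreSet H σ)) e

/-- The remaining vertices. -/
def restSet {n : ℕ} (H : Finset (Finset (Fin n))) (σ : Fin n → Bool) : Finset (Fin n) :=
  Finset.univ \ (coreSet H σ ∪ backboneSet H σ)

/-- The free vertices: vertices of the rest all of whose edges meet the core in a
bichromatic set. -/
def freeSet {n : ℕ} (H : Finset (Finset (Fin n))) (σ : Fin n → Bool) : Finset (Fin n) :=
  (restSet H σ).filter fun v => ∀ e ∈ H, v ∈ e →
    ∃ w1 ∈ e ∩ coreSet H σ, ∃ w2 ∈ e ∩ coreSet H σ, σ w1 ≠ σ w2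

/-!
Write `x = (1 + α) / 2`, `γ = 1 - e^{-β}` and `T = 2^{-k}`. The argument of the logarithm in
`Λ_β(α)` is `(1 - 2Tγ)² + 2Tγ² Δ(x)` with `Δ(x) = x^k + (1 - x)^k - 2T ≥ 0`, so
`log (a + b) ≤ log a + b / a` and the upper bound on `d / k` give
`Λ_β(α) - Λ_β(0) ≤ H(x) + (log 2 - T) Δ(x) - log 2`. The right-hand side is negative for
`x ≠ 1/2` once `k` is large. For `1/2 < x ≤ 9/10` the entropy deficit `log 2 - H(x) ≥ (x - 1/2)²`
beats `Δ(x) ≤ 8 k² (x - 1/2)² (9/10)^k`. For `ε = 1 - x < 1/10`, `-ε log ε` is bounded by a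
tangent line and `(1 - ε)^k` by `1 - kε + (kε)²/2` or by `e⁻¹`, according to whether
`ε ≤ k⁻²`, `kε ≤ 1` or `kε ≥ 1`.
-/

namespace Real

lemma negMulLog_le_tangent {x y : ℝ} (hx : 0 ≤ x) (hy : 0 < y) :
    negMulLog x ≤ -x * log y + y - x := by
  have hxy : x = y * (x / y) := by field_simp
  have h := negMulLog_le_one_sub_self (div_nonneg hx hy.le)
  rw [hxy, negMulLog_mul, negMulLog, ← hxy]
  have : x / y * (-y * log y) = -x * log y := by field_simp
  nlinarith

lemma binEntropy_le_negMulLog_add_self {p : ℝ} (hp : p ≤ 1) :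
    binEntropy p ≤ negMulLog p + p := by
  rw [binEntropy_eq_negMulLog_add_negMulLog_one_sub]
  linarith [negMulLog_le_one_sub_self (sub_nonneg.mpr hp)]

lemma two_mul_sub_two_mul_sqrt_le_mul_log {t : ℝ} (ht : 0 ≤ t) :
    2 * t - 2 * √t ≤ t * log t := by
  have h := mul_le_mul_of_nonneg_left (self_sub_one_le_mul_log (sqrt_nonneg t))
    (by positivity : (0:ℝ) ≤ 2 * √t)
  have hst := mul_self_sqrt ht
  rw [log_sqrt ht] at h
  linear_combination h + (log t - 2) * hst

lemma sqrt_add_sqrt_le {a b : ℝ} (ha : 0 ≤ a) (hb : 0 ≤ b) (hab : a + b = 2) :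
    √a + √b ≤ 2 - (a - b) ^ 2 / 16 := by
  have hsa := sq_sqrt ha
  have hsb := sq_sqrt hb
  have h0a := sqrt_nonneg a
  have h0b := sqrt_nonneg b
  nlinarith [sq_nonneg (√a - √b), mul_nonneg h0a h0b, sq_nonneg (√a + √b - 2)]

lemma sq_sub_two_inv_le_log_two_sub_binEntropy {p : ℝ} (h0 : 0 ≤ p) (h1 : p ≤ 1) :
    (p - 2⁻¹) ^ 2 ≤ log 2 - binEntropy p := by
  have hneg : negMulLog (2 * p) + negMulLog (2 * (1 - p)) = 2 * binEntropy p - 2 * log 2 := by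
    rw [negMulLog_mul, negMulLog_mul, binEntropy_eq_negMulLog_add_negMulLog_one_sub, negMulLog]
    ring
  have ha := two_mul_sub_two_mul_sqrt_le_mul_log (by linarith : 0 ≤ 2 * p)
  have hb := two_mul_sub_two_mul_sqrt_le_mul_log (by linarith : 0 ≤ 2 * (1 - p))
  have hs := sqrt_add_sqrt_le (by linarith : 0 ≤ 2 * p) (by linarith : 0 ≤ 2 * (1 - p)) (by ring)
  simp only [negMulLog] at hneg
  nlinarith

lemma log_add_sub_log_le {a b : ℝ} (ha : 0 < a) (hb : 0 ≤ b) : log (a + b) - log a ≤ b / a := by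
  have h := log_le_sub_one_of_pos (by positivity : 0 < (a + b) / a)
  rw [log_div (by positivity) ha.ne', add_div, div_self ha.ne'] at h
  linarith

lemma log_le_div_hundred {x : ℝ} (hx : 2500 ≤ x) : log x ≤ x / 100 := by
  rw [log_le_iff_le_exp (by linarith)]
  have h := pow_div_factorial_le_exp _ (by linarith : (0:ℝ) ≤ x / 100) 3
  norm_num [Nat.factorial] at h
  nlinarith [mul_nonneg (by linarith : (0:ℝ) ≤ x) (by nlinarith : (0:ℝ) ≤ x * x - 6000000)]

end Real

lemma one_sub_pow_mul_pow_four_le {t : ℝ} (ht0 : 0 ≤ t) (ht1 : t ≤ 1) (k : ℕ) :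
    (1 - t) ^ k * (t * k) ^ 4 ≤ 24 := by
  rcases k.eq_zero_or_pos with rfl | hk
  · simp
  have hk' : (0:ℝ) < k := Nat.cast_pos.mpr hk
  have hexp : (1 - t) ^ k ≤ exp (-(t * k)) := by
    simpa [mul_div_cancel_right₀ t hk'.ne'] using
      one_sub_div_pow_le_exp_neg (n := k) (t := t * k) (by nlinarith)
  have hfac : (t * k) ^ 4 / 24 ≤ exp (t * k) := by
    simpa [Nat.factorial] using pow_div_factorial_le_exp _ (by positivity : 0 ≤ t * k) 4
  calc (1 - t) ^ k * (t * k) ^ 4 ≤ exp (-(t * k)) * (24 * exp (t * k)) :=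
        mul_le_mul hexp (by linarith) (by positivity) (exp_pos _).le
    _ = 24 := by rw [mul_left_comm, ← exp_add]; simp

lemma one_sub_pow_le {ε : ℝ} (h0 : 0 ≤ ε) (h1 : ε ≤ 1) (k : ℕ) :
    (1 - ε) ^ k ≤ 1 - k * ε + (k * ε) ^ 2 / 2 := by
  induction k with
  | zero => simp
  | succ n ih =>
    rw [pow_succ]
    have hn : (0:ℝ) ≤ n := n.cast_nonneg
    calc (1 - ε) ^ n * (1 - ε) ≤ (1 - n * ε + (n * ε) ^ 2 / 2) * (1 - ε) :=
          mul_le_mul_of_nonneg_right ih (by linarith)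
      _ ≤ _ := by push_cast; nlinarith [mul_nonneg (mul_nonneg hn hn) (pow_nonneg h0 3)]

lemma one_add_pow_sub_one_sub_pow_le {u : ℝ} (h0 : 0 ≤ u) (h1 : u ≤ 1) (n : ℕ) :
    (1 + u) ^ n - (1 - u) ^ n ≤ 2 * n * u * (1 + u) ^ n := by
  induction n with
  | zero => simp
  | succ n ih =>
    have hle : (1 - u) ^ n ≤ (1 + u) ^ n := pow_le_pow_left₀ (by linarith) (by linarith) n
    have hmono : (1 + u) ^ n ≤ (1 + u) ^ (n + 1) := pow_le_pow_right₀ (by linarith) n.le_succ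
    have hn : (0:ℝ) ≤ n := n.cast_nonneg
    have hstep : (1 + u) ^ (n + 1) - (1 - u) ^ (n + 1)
        = ((1 + u) ^ n - (1 - u) ^ n) + u * ((1 + u) ^ n + (1 - u) ^ n) := by ring
    push_cast
    rw [hstep]
    nlinarith [mul_le_mul_of_nonneg_left hmono (by positivity : (0:ℝ) ≤ 2 * (n + 1) * u)]

lemma one_add_pow_add_one_sub_pow_le {u : ℝ} (h0 : 0 ≤ u) (h1 : u ≤ 1) (n : ℕ) :
    (1 + u) ^ n + (1 - u) ^ n ≤ 2 + 2 * n ^ 2 * u ^ 2 * (1 + u) ^ n := by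
  induction n with
  | zero => norm_num
  | succ n ih =>
    have hg := mul_le_mul_of_nonneg_left (one_add_pow_sub_one_sub_pow_le h0 h1 n) h0
    have hmono : (1 + u) ^ n ≤ (1 + u) ^ (n + 1) := pow_le_pow_right₀ (by linarith) n.le_succ
    have hn : (0:ℝ) ≤ n := n.cast_nonneg
    have hstep : (1 + u) ^ (n + 1) + (1 - u) ^ (n + 1)
        = ((1 + u) ^ n + (1 - u) ^ n) + u * ((1 + u) ^ n - (1 - u) ^ n) := by ring
    push_cast
    rw [hstep]
    nlinarith [mul_le_mul_of_nonneg_left hmono (by positivity : (0:ℝ) ≤ 2 * (n ^ 2 + n) * u ^ 2),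
      mul_nonneg (sq_nonneg u) (pow_nonneg (by linarith : (0:ℝ) ≤ 1 + u) (n + 1))]

lemma natCast_mul_two_inv_pow_le {k : ℕ} (hk : 7000 ≤ k) : (k:ℝ) * 2⁻¹ ^ k ≤ 1 / 100000 := by
  have hk' : (7000:ℝ) ≤ k := by exact_mod_cast hk
  have h := one_sub_pow_mul_pow_four_le (by norm_num : (0:ℝ) ≤ 2⁻¹) (by norm_num) k
  have h4 : (k * 2⁻¹ ^ k) * (k:ℝ) ^ 3 ≤ 384 := by
    rw [show (1:ℝ) - 2⁻¹ = 2⁻¹ by norm_num] at h; linarith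
  nlinarith [pow_le_pow_left₀ (by norm_num) hk' 3, pow_pos (by norm_num : (0:ℝ) < 2⁻¹) k]

lemma two_inv_pow_le_inv_eight {k : ℕ} (hk : 3 ≤ k) : (2:ℝ)⁻¹ ^ k ≤ 8⁻¹ :=
  (pow_le_pow_of_le_one (by norm_num) (by norm_num) hk).trans_eq (by norm_num)

lemma two_inv_pow_le {k : ℕ} (hk : 7000 ≤ k) : (2:ℝ)⁻¹ ^ k ≤ 1 / 100000 :=
  (le_mul_of_one_le_left (by positivity) (by exact_mod_cast (by omega : 1 ≤ k))).trans
    (natCast_mul_two_inv_pow_le hk)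

lemma sq_mul_nine_tenths_pow_le {k : ℕ} (hk : 7000 ≤ k) : (k:ℝ) ^ 2 * (9 / 10) ^ k ≤ 1 / 200 := by
  have hk' : (7000:ℝ) ≤ k := by exact_mod_cast hk
  have h := one_sub_pow_mul_pow_four_le (by norm_num : (0:ℝ) ≤ 1 / 10) (by norm_num) k
  norm_num at h
  nlinarith [pow_pos (by norm_num : (0:ℝ) < 9 / 10) k]

def powSumExcess (k : ℕ) (x : ℝ) : ℝ := x ^ k + (1 - x) ^ k - 2 * 2⁻¹ ^ k

lemma powSumExcess_one_sub (k : ℕ) (x : ℝ) : powSumExcess k (1 - x) = powSumExcess k x := by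
  simp only [powSumExcess, sub_sub_cancel, add_comm]

lemma powSumExcess_two_inv (k : ℕ) : powSumExcess k 2⁻¹ = 0 := by
  norm_num [powSumExcess]; ring

lemma powSumExcess_nonneg {k : ℕ} (hk : k ≠ 0) {x : ℝ} (h0 : 0 ≤ x) (h1 : x ≤ 1) :
    0 ≤ powSumExcess k x := by
  have h := add_pow_le h0 (sub_nonneg.2 h1) k
  obtain ⟨j, rfl⟩ := Nat.exists_eq_add_one_of_ne_zero hk
  rw [add_sub_cancel, one_pow, Nat.add_sub_cancel] at h
  have h2 : (2:ℝ) * 2⁻¹ ^ (j + 1) * 2 ^ j = 1 := by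
    rw [pow_succ, inv_pow]; field_simp
  have h3 : (0:ℝ) ≤ 2 * 2⁻¹ ^ (j + 1) := by positivity
  have h4 := mul_le_mul_of_nonneg_left h h3
  rw [mul_one, ← mul_assoc, h2, one_mul] at h4
  unfold powSumExcess
  linarith

lemma powSumExcess_le_of_two_inv_le {x : ℝ} (h0 : 2⁻¹ ≤ x) (h1 : x ≤ 1) (k : ℕ) :
    powSumExcess k x ≤ 8 * k ^ 2 * (x - 2⁻¹) ^ 2 * x ^ k := by
  have h := one_add_pow_add_one_sub_pow_le (u := 2 * x - 1) (by linarith) (by linarith) k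
  have hx : x ^ k = 2⁻¹ ^ k * (1 + (2 * x - 1)) ^ k := by rw [← mul_pow]; ring_nf
  have hx' : (1 - x) ^ k = 2⁻¹ ^ k * (1 - (2 * x - 1)) ^ k := by rw [← mul_pow]; ring_nf
  unfold powSumExcess
  rw [hx, hx']
  nlinarith [mul_le_mul_of_nonneg_left h (by positivity : (0:ℝ) ≤ 2⁻¹ ^ k)]

def lamMajorant (k : ℕ) (x : ℝ) : ℝ := binEntropy x + (log 2 - 2⁻¹ ^ k) * powSumExcess k x

lemma lamMajorant_one_sub (k : ℕ) (x : ℝ) : lamMajorant k (1 - x) = lamMajorant k x := by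
  rw [lamMajorant, lamMajorant, binEntropy_one_sub, powSumExcess_one_sub]

section LargeK

variable {k : ℕ}

lemma lamMajorant_lt_log_two_of_sq_mul_le_one (hk : 7000 ≤ k) {ε : ℝ} (h0 : 0 ≤ ε)
    (hε : (k:ℝ) ^ 2 * ε ≤ 1) : lamMajorant k ε < log 2 := by
  have hk' : (7000:ℝ) ≤ k := by exact_mod_cast hk
  have hkT := natCast_mul_two_inv_pow_le hk
  have hT0 : (0:ℝ) < 2⁻¹ ^ k := by positivity
  rw [lamMajorant, powSumExcess]
  set T : ℝ := 2⁻¹ ^ k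
  have hε1 : ε ≤ 1 := by nlinarith
  have hlogT : log (2 * T) = log 2 - k * log 2 := by
    rw [log_mul two_ne_zero hT0.ne', log_pow, log_inv]; ring
  -- Tangent at `2T`: the entropy gain `ε (k - 1) log 2` is paid for by the `-kε` in `(1 - ε)^k`.
  have hH : binEntropy ε ≤ ε * (k - 1) * log 2 + 2 * T := by
    have := negMulLog_le_tangent h0 (by positivity : 0 < 2 * T)
    rw [hlogT] at this
    linarith [binEntropy_le_negMulLog_add_self hε1]
  have hΔ : ε ^ k + (1 - ε) ^ k - 2 * T ≤ ε ^ 2 + (1 - k * ε + (k * ε) ^ 2 / 2) - 2 * T := by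
    linarith [one_sub_pow_le h0 hε1 k, pow_le_pow_of_le_one h0 hε1 (by omega : 2 ≤ k)]
  have hL := log_two_gt_d9
  have hTs : T ≤ 1 / 100000 := two_inv_pow_le hk
  have hεs : ε ≤ 1 / 1000 := by nlinarith
  have hD : 0 ≤ log 2 - T := by linarith
  calc binEntropy ε + (log 2 - T) * (ε ^ k + (1 - ε) ^ k - 2 * T)
      ≤ ε * (k - 1) * log 2 + 2 * T
        + (log 2 - T) * (ε ^ 2 + (1 - k * ε + (k * ε) ^ 2 / 2) - 2 * T) :=
        add_le_add hH (mul_le_mul_of_nonneg_left hΔ hD)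
    _ < log 2 := by
      nlinarith [mul_le_mul_of_nonneg_left hkT h0, mul_le_mul_of_nonneg_left hε (mul_nonneg hD h0),
        mul_le_mul_of_nonneg_left hεs (mul_nonneg hD h0), mul_nonneg hT0.le h0,
        mul_neg_of_pos_of_neg hT0 (by linarith : 1 - 2 * log 2 + 2 * T < 0)]

lemma lamMajorant_lt_log_two_of_mul_le_one (hk : 7000 ≤ k) {ε : ℝ} (hε : 1 ≤ (k:ℝ) ^ 2 * ε)
    (hkε : k * ε ≤ 1) : lamMajorant k ε < log 2 := by
  have hk' : (7000:ℝ) ≤ k := by exact_mod_cast hk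
  have hT0 : (0:ℝ) < 2⁻¹ ^ k := by positivity
  rw [lamMajorant, powSumExcess]
  set T : ℝ := 2⁻¹ ^ k
  have hε0 : 0 < ε := by nlinarith
  have hε1 : ε ≤ 1 := by nlinarith
  have hH : binEntropy ε ≤ ε * (k / 50) + ε := by
    have h := negMulLog_le_tangent hε0.le (by positivity : (0:ℝ) < ((k:ℝ) ^ 2)⁻¹)
    rw [log_inv, log_pow] at h
    push_cast at h
    have hinv : ((k:ℝ) ^ 2)⁻¹ ≤ ε := by
      rw [inv_le_iff_one_le_mul₀ (by positivity)]; linarith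
    have hlog := log_le_div_hundred (by linarith : (2500:ℝ) ≤ k)
    nlinarith [binEntropy_le_negMulLog_add_self hε1, mul_le_mul_of_nonneg_left hlog hε0.le]
  have hΔ : ε ^ k + (1 - ε) ^ k - 2 * T ≤ ε ^ 2 + (1 - k * ε / 2) - 2 * T := by
    have := one_sub_pow_le hε0.le hε1 k
    have := pow_le_pow_of_le_one hε0.le hε1 (by omega : 2 ≤ k)
    nlinarith [mul_nonneg (by positivity : (0:ℝ) ≤ k * ε) (sub_nonneg.2 hkε)]
  have hL := log_two_gt_d9
  have hTs : T ≤ 1 / 100000 := two_inv_pow_le hk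
  have hD : 0 < log 2 - T := by linarith
  calc binEntropy ε + (log 2 - T) * (ε ^ k + (1 - ε) ^ k - 2 * T)
      ≤ ε * (k / 50) + ε + (log 2 - T) * (ε ^ 2 + (1 - k * ε / 2) - 2 * T) :=
        add_le_add hH (mul_le_mul_of_nonneg_left hΔ hD.le)
    _ < log 2 := by
      nlinarith [mul_le_mul_of_nonneg_left hε1 (mul_nonneg hD.le hε0.le), mul_pos hT0 hε0,
        mul_le_mul_of_nonneg_left hk' (mul_nonneg hD.le hε0.le), mul_pos hT0 hD]

lemma lamMajorant_lt_log_two_of_one_le_mul (hk : 7000 ≤ k) {ε : ℝ} (hkε : 1 ≤ k * ε)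
    (hε : ε < 1 / 10) : lamMajorant k ε < log 2 := by
  have hk0 : (0:ℝ) < k := by exact_mod_cast (by omega : 0 < k)
  have hε0 : 0 < ε := by nlinarith
  have hT0 : (0:ℝ) < 2⁻¹ ^ k := by positivity
  rw [lamMajorant, powSumExcess]
  set T : ℝ := 2⁻¹ ^ k
  have hH : binEntropy ε ≤ 3 * ε * log 2 + 1 / 8 := by
    have h := negMulLog_le_tangent hε0.le (by norm_num : (0:ℝ) < 1 / 8)
    rw [one_div, log_inv, show (8:ℝ) = 2 ^ 3 by norm_num, log_pow] at h
    push_cast at h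
    linarith [binEntropy_le_negMulLog_add_self (by linarith : ε ≤ 1)]
  have hexp : (1 - ε) ^ k ≤ exp (-1) := by
    have h := one_sub_div_pow_le_exp_neg (n := k) (t := k * ε) (by nlinarith)
    rw [mul_div_cancel_left₀ ε hk0.ne'] at h
    exact h.trans (exp_le_exp.2 (by linarith))
  have hΔ : ε ^ k + (1 - ε) ^ k - 2 * T ≤ 378 / 1000 := by
    have := pow_le_pow_of_le_one hε0.le (by linarith) (by omega : 2 ≤ k)
    nlinarith [exp_neg_one_lt_d9]
  have hL := log_two_gt_d9
  have hTs : T ≤ 1 / 100000 := two_inv_pow_le hk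
  have hD := mul_le_mul_of_nonneg_left hΔ (by linarith : 0 ≤ log 2 - T)
  nlinarith

lemma lamMajorant_lt_log_two_of_two_inv_lt (hk : 7000 ≤ k) {x : ℝ} (hx : 2⁻¹ < x)
    (hx' : x ≤ 9 / 10) : lamMajorant k x < log 2 := by
  have hH := sq_sub_two_inv_le_log_two_sub_binEntropy (by linarith) (by linarith : x ≤ 1)
  have hΔ := powSumExcess_le_of_two_inv_le hx.le (by linarith) k
  have hpow : x ^ k ≤ (9 / 10) ^ k := pow_le_pow_left₀ (by linarith) hx' k
  have hk9 := sq_mul_nine_tenths_pow_le hk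
  have hsq : 0 < (x - 2⁻¹) ^ 2 := by nlinarith
  have hL := log_two_lt_d9
  have hD : 0 ≤ log 2 - 2⁻¹ ^ k := by linarith [log_two_gt_d9, two_inv_pow_le hk]
  have hΔ' : powSumExcess k x ≤ (x - 2⁻¹) ^ 2 / 25 := by
    nlinarith [mul_le_mul_of_nonneg_left hpow (by positivity : (0:ℝ) ≤ 8 * k ^ 2 * (x - 2⁻¹) ^ 2)]
  rw [lamMajorant]
  nlinarith [mul_le_mul_of_nonneg_left hΔ' hD, pow_pos (by norm_num : (0:ℝ) < 2⁻¹) k]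

lemma lamMajorant_lt_log_two (hk : 7000 ≤ k) {x : ℝ} (h0 : 0 ≤ x) (h1 : x ≤ 1)
    (hx : x ≠ 2⁻¹) : lamMajorant k x < log 2 := by
  wlog hx2 : 2⁻¹ < x generalizing x
  · have hlt : x < 2⁻¹ := lt_of_le_of_ne (not_lt.1 hx2) hx
    rw [← lamMajorant_one_sub]
    exact this (by linarith) (by linarith) (by intro h; linarith) (by linarith)
  rcases le_or_gt x (9 / 10) with hmid | hedge
  · exact lamMajorant_lt_log_two_of_two_inv_lt hk hx2 hmid
  rw [← lamMajorant_one_sub]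
  rcases le_or_gt ((k:ℝ) ^ 2 * (1 - x)) 1 with htight | hloose
  · exact lamMajorant_lt_log_two_of_sq_mul_le_one hk (by linarith) htight
  rcases le_or_gt ((k:ℝ) * (1 - x)) 1 with hmod | hfar
  · exact lamMajorant_lt_log_two_of_mul_le_one hk hloose.le hmod
  · exact lamMajorant_lt_log_two_of_one_le_mul hk hfar.le (by linarith)

end LargeK

lemma entH_eq_binEntropy : entH = binEntropy := by
  funext z
  simp only [entH, binEntropy, log_inv]
  ring

lemma Lam_eq (k : ℕ) (d β α : ℝ) :
    Lam k d β α = binEntropy ((1 + α) / 2) + d / k * log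
      ((1 - 2 * 2⁻¹ ^ k * (1 - exp (-β))) ^ 2
        + 2 * 2⁻¹ ^ k * (1 - exp (-β)) ^ 2 * powSumExcess k ((1 + α) / 2)) := by
  rw [Lam, entH_eq_binEntropy, powSumExcess, zpow_sub₀ two_ne_zero, zpow_one, zpow_natCast,
    show 1 - (1 + α) / 2 = (1 - α) / 2 by ring, div_pow, div_pow, inv_pow]
  congr 3
  field_simp
  ring

lemma mul_coeff_le_log_two_sub_two_inv_pow {k : ℕ} (hk : 3 ≤ k) {γ δ : ℝ} (hγ0 : 0 ≤ γ)
    (hγ1 : γ ≤ 1) (hδ0 : 0 ≤ δ) (hδ : δ ≤ 2 ^ (k - 1) * log 2 - 2) :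
    δ * (2 * 2⁻¹ ^ k * γ ^ 2 / (1 - 2 * 2⁻¹ ^ k * γ) ^ 2) ≤ log 2 - 2⁻¹ ^ k := by
  have hT0 : (0:ℝ) < 2⁻¹ ^ k := by positivity
  have hT8 := two_inv_pow_le_inv_eight hk
  have hpow : (2:ℝ) ^ (k - 1) * (2 * 2⁻¹ ^ k) = 1 := by
    obtain ⟨j, rfl⟩ := Nat.exists_eq_add_of_le' (by omega : 1 ≤ k)
    rw [Nat.add_sub_cancel, pow_succ, inv_pow]
    field_simp
  set T : ℝ := 2⁻¹ ^ k
  have hL := log_two_lt_d9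
  have hL' := log_two_gt_d9
  have hγ2 : γ ^ 2 ≤ 1 := by nlinarith
  have hpos : (0:ℝ) < (1 - 2 * T) ^ 2 := by nlinarith
  have hcoef : 2 * T * γ ^ 2 / (1 - 2 * T * γ) ^ 2 ≤ 2 * T / (1 - 2 * T) ^ 2 :=
    div_le_div₀ (by positivity) (mul_le_of_le_one_right (by positivity) hγ2) hpos
      (pow_le_pow_left₀ (by linarith) (by nlinarith) 2)
  calc δ * (2 * T * γ ^ 2 / (1 - 2 * T * γ) ^ 2)
      ≤ (2 ^ (k - 1) * log 2 - 2) * (2 * T / (1 - 2 * T) ^ 2) :=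
        mul_le_mul hδ hcoef (by positivity) (hδ0.trans hδ)
    _ = (log 2 - 4 * T) / (1 - 2 * T) ^ 2 := by
        rw [← mul_div_assoc]
        congr 1
        linear_combination log 2 * hpow
    _ ≤ log 2 - T := by
        rw [div_le_iff₀ hpos]
        nlinarith [mul_nonneg hT0.le (mul_nonneg hT0.le (by linarith : (0:ℝ) ≤ log 2 + 1 - T))]

lemma Lam_sub_Lam_zero_le {k : ℕ} (hk : 3 ≤ k) {d β α : ℝ} (hd : 0 ≤ d)
    (hdk : d / k ≤ 2 ^ (k - 1) * log 2 - 2) (hβ : 0 ≤ β) (hα : α ∈ Set.Icc (-1:ℝ) 1) :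
    Lam k d β α - Lam k d β 0 ≤ lamMajorant k ((1 + α) / 2) - log 2 := by
  have hx0 : 0 ≤ (1 + α) / 2 := by linarith [hα.1]
  have hx1 : (1 + α) / 2 ≤ 1 := by linarith [hα.2]
  have hΔ := powSumExcess_nonneg (by omega : k ≠ 0) hx0 hx1
  have hT8 := two_inv_pow_le_inv_eight hk
  have hγ0 : 0 ≤ 1 - exp (-β) := sub_nonneg.2 (exp_le_one_iff.2 (by linarith))
  have hγ1 : 1 - exp (-β) ≤ 1 := by linarith [exp_pos (-β)]
  have hcoef := mul_coeff_le_log_two_sub_two_inv_pow hk hγ0 hγ1 (by positivity) hdk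
  rw [Lam_eq, Lam_eq, add_zero, ← inv_eq_one_div, powSumExcess_two_inv, binEntropy_two_inv,
    mul_zero, add_zero, lamMajorant]
  set γ := 1 - exp (-β)
  set T : ℝ := 2⁻¹ ^ k
  set Δ := powSumExcess k ((1 + α) / 2)
  have hA : 0 < (1 - 2 * T * γ) ^ 2 :=
    pow_pos (by nlinarith [pow_nonneg (by norm_num : (0:ℝ) ≤ 2⁻¹) k]) 2
  have hlog := mul_le_mul_of_nonneg_left
    (log_add_sub_log_le hA (by positivity : 0 ≤ 2 * T * γ ^ 2 * Δ)) (by positivity : 0 ≤ d / k)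
  have hsplit : 2 * T * γ ^ 2 * Δ / (1 - 2 * T * γ) ^ 2
      = 2 * T * γ ^ 2 / (1 - 2 * T * γ) ^ 2 * Δ := by ring
  rw [hsplit, ← mul_assoc] at hlog
  linarith [mul_le_mul_of_nonneg_right hcoef hΔ]

theorem statement_14_general (C : ℝ) :
    ∃ k0 : ℕ, ∀ k : ℕ, k0 ≤ k → ∀ d : ℝ, 0 < d →
      (2:ℝ) ^ (k - 1) * Real.log 2 - C ≤ d / k →
      d / k ≤ (2:ℝ) ^ (k - 1) * Real.log 2 - 2 →
      ∀ β : ℝ, 0 ≤ β →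
      ∀ α ∈ Set.Icc (-1:ℝ) 1, α ≠ 0 → Lam k d β α < Lam k d β 0 := by
  refine ⟨7000, fun k hk d hd _ hdk β hβ α hα hα0 => ?_⟩
  have hx : (1 + α) / 2 ≠ 2⁻¹ := fun h => hα0 (by linarith)
  have hLam := Lam_sub_Lam_zero_le (by omega) hd.le hdk hβ hα
  have hmaj := lamMajorant_lt_log_two hk (by linarith [hα.1]) (by linarith [hα.2]) hx
  linarith

theorem statement_14 (C : ℝ) (hC : 0 < C) :
    ∃ k0 : ℕ, ∀ k : ℕ, k0 ≤ k → ∀ d : ℝ, 0 < d →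
      (2:ℝ) ^ (k - 1) * Real.log 2 - C ≤ d / k →
      d / k ≤ (2:ℝ) ^ (k - 1) * Real.log 2 - 2 →
      ∀ β : ℝ, 0 ≤ β →
      ∀ α ∈ Set.Icc (-1:ℝ) 1, α ≠ 0 → Lam k d β α < Lam k d β 0 :=
  statement_14_general C
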